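/- arXiv:1408.2631 — 2 statements merged into one kernel-verified Lean document; each statement's English description precedes it below -/
import Mathlib

section
/- Let (s_t)_{t≥0} be a semigroup of adjointable isometries on a Hilbert C*-module E. For 0 ≤ a < b < ∞ and 0 ≤ t < b−a, define u_t^{a,b} := s_t p_{a, b−t} + s_{b−a−t}^* p_{b−t, b}, extended periodically with period b−a to all real t. Then each u_t^{a,b} is a unitary on E_{a,b} := p_{a,b}E and u_r^{a,b} u_t^{a,b} = u_{r+t}^{a,b} for all real r, t. -/
open scoped RightActions
open MeasureTheory Filter Topology

noncomputable section

variable {A E : Type*} [CStarAlgebra A] [PartialOrder A] [StarOrderedRing A]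
  [NormedAddCommGroup E] [NormedSpace ℂ E] [SMul A E] [CStarModule A E]

local notation "⟪" x ", " y "⟫" => (inner A x y : A)

variable (A) in
/-- Orthogonal complement of a subset of a Hilbert C*-module. -/
def ortho (F : Set E) : Set E := {x : E | ∀ y ∈ F, ⟪y, x⟫ = 0}
/-- The spectral projection family `p_{c,d} := s_c s_c^* - s_d s_d^*`, with the
convention `p_{c,d} := 0` for `c > d`. -/
def pab {E : Type*} [NormedAddCommGroup E] [NormedSpace ℂ E]
    (s sa : ℝ → E →ₗ[ℂ] E) (c d : ℝ) : E →ₗ[ℂ] E :=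
  if c ≤ d then (s c).comp (sa c) - (s d).comp (sa d) else 0
/-- The reduced time `t - n(b-a)` for `t ∈ [n(b-a), (n+1)(b-a))`. -/
def redt (a b t : ℝ) : ℝ := t - (b - a) * (⌊t / (b - a)⌋ : ℝ)

/-- The shift-modulo-`b-a` unitary group `u_t^{a,b} = s_τ p_{a,b-τ} + s_{b-a-τ}^* p_{b-τ,b}`
(with `τ := t - n(b-a)` the reduction of `t` modulo the period `b-a`). -/
def uab {E : Type*} [NormedAddCommGroup E] [NormedSpace ℂ E]
    (s sa : ℝ → E →ₗ[ℂ] E) (a b : ℝ) (t : ℝ) : E →ₗ[ℂ] E :=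
  (s (redt a b t)).comp (pab s sa a (b - redt a b t)) +
    (sa (b - a - redt a b t)).comp (pab s sa (b - redt a b t) b)

end

/-!
Write `m(x, y) := s_x s_y^*`. Because `s_y^* s_x` is `s_{x-y}` or `s_{y-x}^*` according as
`y ≤ x` or `x ≤ y`, these monomials multiply like the continuous bicyclic monoid:
`m(x, y) m(x', y') = m(x + (x' - y)⁺, y' + (y - x')⁺)`. In monomials
`u_τ = m(a+τ, a) - m(a+τ, b) + m(a, b-τ) - m(b, b-τ)`, so `u_ρ u_τ` is a sum of sixteen monomials
that telescopes to `u_{ρ+τ}`, or to `u_{ρ+τ-(b-a)}` when `ρ + τ` passes the period. The same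
formula shows that the adjoint of `u_τ` is `u_{b-a-τ}`, and `u_0 = p_{a,b}`; unitarity on
`p_{a,b} E` and the group law follow.
-/

structure IsometricSemigroup {R : Type*} [Monoid R] (s sa : ℝ → R) : Prop where
  mul : ∀ r t : ℝ, 0 ≤ r → 0 ≤ t → s r * s t = s (r + t)
  adjoint_mul : ∀ r t : ℝ, 0 ≤ r → 0 ≤ t → sa t * sa r = sa (r + t)
  adjoint_mul_self : ∀ t : ℝ, 0 ≤ t → sa t * s t = 1

namespace IsometricSemigroup

section Monoid

variable {R : Type*} [Monoid R] {s sa : ℝ → R}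

def monomial (s sa : ℝ → R) (x y : ℝ) : R := s x * sa y

variable (h : IsometricSemigroup s sa) {x y x' y' : ℝ}
include h

lemma adjoint_mul_of_le (hy : 0 ≤ y) (hyx : y ≤ x) : sa y * s x = s (x - y) :=
  calc sa y * s x = sa y * (s y * s (x - y)) := by
        rw [h.mul y _ hy (sub_nonneg.2 hyx), add_sub_cancel]
    _ = s (x - y) := by rw [← mul_assoc, h.adjoint_mul_self y hy, one_mul]

lemma adjoint_mul_of_ge (hx : 0 ≤ x) (hxy : x ≤ y) : sa y * s x = sa (y - x) :=
  calc sa y * s x = sa (y - x) * sa x * s x := by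
        rw [h.adjoint_mul x _ hx (sub_nonneg.2 hxy), add_sub_cancel]
    _ = sa (y - x) := by rw [mul_assoc, h.adjoint_mul_self x hx, mul_one]

lemma mul_monomial (hy : 0 ≤ y) (hx : 0 ≤ x) :
    s y * monomial s sa x x' = monomial s sa (y + x) x' := by
  rw [monomial, ← mul_assoc, h.mul y x hy hx, monomial]

lemma adjoint_mul_monomial (hy : 0 ≤ y) (hyx : y ≤ x) :
    sa y * monomial s sa x x' = monomial s sa (x - y) x' := by
  rw [monomial, ← mul_assoc, h.adjoint_mul_of_le hy hyx, monomial]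

lemma monomial_mul_of_le (hx : 0 ≤ x) (hy : 0 ≤ y) (hyx' : y ≤ x') :
    monomial s sa x y * monomial s sa x' y' = monomial s sa (x + (x' - y)) y' := by
  simp only [monomial]
  rw [mul_assoc, ← mul_assoc (sa y), h.adjoint_mul_of_le hy hyx', ← mul_assoc,
    h.mul x _ hx (sub_nonneg.2 hyx')]

lemma monomial_mul_of_ge (hx' : 0 ≤ x') (hx'y : x' ≤ y) (hy' : 0 ≤ y') :
    monomial s sa x y * monomial s sa x' y' = monomial s sa x (y' + (y - x')) := by
  simp only [monomial]
  rw [mul_assoc, ← mul_assoc (sa y), h.adjoint_mul_of_ge hx' hx'y,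
    h.adjoint_mul y' _ hy' (sub_nonneg.2 hx'y)]

end Monoid

section Ring

variable {R : Type*} [Ring R] {s sa : ℝ → R}

def cyclicShift (s sa : ℝ → R) (a b τ : ℝ) : R :=
  monomial s sa (a + τ) a - monomial s sa (a + τ) b + monomial s sa a (b - τ) -
    monomial s sa b (b - τ)

variable {a b ρ τ : ℝ}

lemma cyclicShift_zero : cyclicShift s sa a b 0 = monomial s sa a a - monomial s sa b b := by
  simp only [cyclicShift, add_zero, sub_zero, sub_add_cancel]

variable (h : IsometricSemigroup s sa)
include h

/- `R` is noncommutative, so `ring_nf` only normalises the real arguments of the monomials;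
`abel` then does the cancellation. -/

lemma shift_add_coshift_eq_cyclicShift (ha : 0 ≤ a) (hτ : 0 ≤ τ) (hτb : τ ≤ b - a) :
    s τ * (monomial s sa a a - monomial s sa (b - τ) (b - τ)) +
      sa (b - a - τ) * (monomial s sa (b - τ) (b - τ) - monomial s sa b b) =
      cyclicShift s sa a b τ := by
  simp (disch := grind) only [mul_sub, h.mul_monomial, h.adjoint_mul_monomial, cyclicShift]
  ring_nf
  abel

lemma cyclicShift_mul_of_add_le (ha : 0 ≤ a) (hρ : 0 ≤ ρ) (hτ : 0 ≤ τ)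
    (hρτ : ρ + τ ≤ b - a) :
    cyclicShift s sa a b ρ * cyclicShift s sa a b τ = cyclicShift s sa a b (ρ + τ) := by
  simp only [cyclicShift, sub_mul, add_mul, mul_sub, mul_add]
  simp (disch := grind) only [h.monomial_mul_of_le, h.monomial_mul_of_ge]
  ring_nf
  abel

lemma cyclicShift_mul_of_le_add (ha : 0 ≤ a) (hρ : 0 ≤ ρ) (hτ : 0 ≤ τ) (hρb : ρ ≤ b - a)
    (hτb : τ ≤ b - a) (hρτ : b - a ≤ ρ + τ) :
    cyclicShift s sa a b ρ * cyclicShift s sa a b τ =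
      cyclicShift s sa a b (ρ + τ - (b - a)) := by
  simp only [cyclicShift, sub_mul, add_mul, mul_sub, mul_add]
  simp (disch := grind) only [h.monomial_mul_of_le, h.monomial_mul_of_ge]
  ring_nf
  abel

lemma cyclicShift_mul (ha : 0 ≤ a) (hab : a < b) (hρ : ρ ∈ Set.Ico 0 (b - a))
    (hτ : τ ∈ Set.Ico 0 (b - a)) :
    cyclicShift s sa a b ρ * cyclicShift s sa a b τ =
      cyclicShift s sa a b (toIcoMod (sub_pos.2 hab) 0 (ρ + τ)) := by
  obtain ⟨hρ0, hρb⟩ := hρ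
  obtain ⟨hτ0, hτb⟩ := hτ
  rcases lt_or_ge (ρ + τ) (b - a) with hlt | hge
  · rw [(toIcoMod_eq_self _).2 ⟨by linarith, by linarith⟩,
      h.cyclicShift_mul_of_add_le ha hρ0 hτ0 hlt.le]
  · rw [(toIcoMod_eq_iff _).2
        ⟨⟨sub_nonneg.2 hge, by linarith⟩, 1, by rw [one_smul, sub_add_cancel]⟩,
      h.cyclicShift_mul_of_le_add ha hρ0 hτ0 hρb.le hτb.le hge]

end Ring

end IsometricSemigroup

open IsometricSemigroup

lemma toIcoMod_zero_toIcoMod_add_toIcoMod {α : Type*} [AddCommGroup α] [LinearOrder α]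
    [IsOrderedAddMonoid α] [Archimedean α] {p : α} (hp : 0 < p) (r t : α) :
    toIcoMod hp 0 (toIcoMod hp 0 r + toIcoMod hp 0 t) = toIcoMod hp 0 (r + t) := by
  refine (toIcoMod_eq_toIcoMod hp).2 ⟨toIcoDiv hp 0 r + toIcoDiv hp 0 t, ?_⟩
  rw [add_smul, ← self_sub_toIcoMod hp 0 r, ← self_sub_toIcoMod hp 0 t]
  abel

lemma redt_eq_toIcoMod {a b : ℝ} (hab : a < b) (t : ℝ) :
    redt a b t = toIcoMod (sub_pos.2 hab) 0 t := by
  rw [toIcoMod_eq_fract_mul, Int.fract, redt]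
  field_simp [(sub_pos.2 hab).ne']

section Shift

variable {E : Type*} [NormedAddCommGroup E] [NormedSpace ℂ E] {s sa : ℝ → E →ₗ[ℂ] E}

lemma pab_eq_monomial {c d : ℝ} (hcd : c ≤ d) :
    pab s sa c d = monomial s sa c c - monomial s sa d d :=
  if_pos hcd

variable {a b : ℝ} (h : IsometricSemigroup s sa) (ha : 0 ≤ a) (hab : a < b)
include h ha hab

lemma uab_eq_cyclicShift (t : ℝ) :
    uab s sa a b t = cyclicShift s sa a b (toIcoMod (sub_pos.2 hab) 0 t) := by
  obtain ⟨hτ, hτb⟩ := toIcoMod_mem_Ico' (sub_pos.2 hab) t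
  rw [uab, redt_eq_toIcoMod hab, pab_eq_monomial (by linarith), pab_eq_monomial (by linarith)]
  exact h.shift_add_coshift_eq_cyclicShift ha hτ hτb.le

lemma uab_mul (r t : ℝ) : uab s sa a b r * uab s sa a b t = uab s sa a b (r + t) := by
  rw [uab_eq_cyclicShift h ha hab, uab_eq_cyclicShift h ha hab, uab_eq_cyclicShift h ha hab,
    h.cyclicShift_mul ha hab (toIcoMod_mem_Ico' _ r) (toIcoMod_mem_Ico' _ t),
    toIcoMod_zero_toIcoMod_add_toIcoMod]

lemma uab_zero : uab s sa a b 0 = pab s sa a b := by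
  rw [uab_eq_cyclicShift h ha hab, toIcoMod_apply_left, cyclicShift_zero,
    pab_eq_monomial hab.le]

lemma pab_apply_of_mem_range {y : E} (hy : y ∈ Set.range (pab s sa a b)) :
    pab s sa a b y = y := by
  obtain ⟨z, rfl⟩ := hy
  rw [← Module.End.mul_apply, ← uab_zero h ha hab, uab_mul h ha hab, add_zero]

lemma uab_apply_mem_range (t : ℝ) (x : E) : uab s sa a b t x ∈ Set.range (pab s sa a b) :=
  ⟨uab s sa a b t x, by
    rw [← uab_zero h ha hab, ← Module.End.mul_apply, uab_mul h ha hab, zero_add]⟩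

end Shift

section CStarModule

variable {A E : Type*} [CStarAlgebra A] [PartialOrder A]
  [NormedAddCommGroup E] [NormedSpace ℂ E] [SMul A E] [CStarModule A E]

local notation "⟪" x ", " y "⟫" => (inner A x y : A)

variable (A) in
lemma CStarModule.ext_inner_left {x y : E} (h : ∀ z : E, ⟪z, x⟫ = ⟪z, y⟫) : x = y := by
  rw [← sub_eq_zero, ← CStarModule.inner_self (A := A), CStarModule.inner_sub_right, h,
    sub_self]

variable {s sa : ℝ → E →ₗ[ℂ] E}

lemma isometricSemigroup_of_inner
    (hsg : ∀ r t : ℝ, 0 ≤ r → 0 ≤ t → s (r + t) = (s r).comp (s t))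
    (hiso : ∀ t : ℝ, 0 ≤ t → ∀ x y : E, ⟪s t x, s t y⟫ = ⟪x, y⟫)
    (hadj : ∀ t : ℝ, 0 ≤ t → ∀ x y : E, ⟪s t x, y⟫ = ⟪x, sa t y⟫) :
    IsometricSemigroup s sa where
  mul r t hr ht := (hsg r t hr ht).symm
  adjoint_mul r t hr ht := by
    ext x
    refine CStarModule.ext_inner_left A fun z => ?_
    rw [Module.End.mul_apply, ← hadj t ht, ← hadj r hr, ← LinearMap.comp_apply,
      ← hsg r t hr ht, hadj (r + t) (add_nonneg hr ht)]
  adjoint_mul_self t ht := by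
    ext x
    refine CStarModule.ext_inner_left A fun z => ?_
    rw [Module.End.mul_apply, ← hadj t ht, hiso t ht, Module.End.one_apply]

lemma inner_monomial
    (hadj : ∀ t : ℝ, 0 ≤ t → ∀ x y : E, ⟪s t x, y⟫ = ⟪x, sa t y⟫)
    {x y : ℝ} (hx : 0 ≤ x) (hy : 0 ≤ y) (v w : E) :
    ⟪monomial s sa x y v, w⟫ = ⟪v, monomial s sa y x w⟫ := by
  have hadj' : ∀ u, ⟪sa y v, u⟫ = ⟪v, s y u⟫ := fun u => by
    rw [← CStarModule.star_inner, ← hadj y hy, CStarModule.star_inner]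
  simp only [monomial, Module.End.mul_apply]
  rw [hadj x hx, hadj']

lemma inner_cyclicShift
    (hadj : ∀ t : ℝ, 0 ≤ t → ∀ x y : E, ⟪s t x, y⟫ = ⟪x, sa t y⟫)
    {a b τ : ℝ} (ha : 0 ≤ a) (hτ : 0 ≤ τ) (hτb : τ ≤ b - a) (v w : E) :
    ⟪cyclicShift s sa a b τ v, w⟫ = ⟪v, cyclicShift s sa a b (b - a - τ) w⟫ := by
  simp (disch := grind) only [cyclicShift, LinearMap.add_apply, LinearMap.sub_apply,
    CStarModule.inner_add_left, CStarModule.inner_sub_left, inner_monomial hadj,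
    CStarModule.inner_add_right, CStarModule.inner_sub_right]
  ring_nf
  abel

lemma inner_uab_apply_uab_apply
    (hadj : ∀ t : ℝ, 0 ≤ t → ∀ x y : E, ⟪s t x, y⟫ = ⟪x, sa t y⟫)
    {a b : ℝ} (h : IsometricSemigroup s sa) (ha : 0 ≤ a)
    (hab : a < b) (t : ℝ) (x y : E) :
    ⟪uab s sa a b t x, uab s sa a b t y⟫ = ⟪x, pab s sa a b y⟫ := by
  obtain ⟨hτ, hτb⟩ := toIcoMod_mem_Ico' (sub_pos.2 hab) t
  rw [uab_eq_cyclicShift h ha hab, inner_cyclicShift hadj ha hτ hτb.le, ← Module.End.mul_apply,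
    h.cyclicShift_mul_of_le_add ha (by linarith) hτ (by linarith) hτb.le (by linarith),
    sub_add_cancel, sub_self, cyclicShift_zero, pab_eq_monomial hab.le]

end CStarModule

section

variable {A E : Type*} [CStarAlgebra A] [PartialOrder A] [StarOrderedRing A]
  [NormedAddCommGroup E] [NormedSpace ℂ E] [SMul A E] [CStarModule A E]

local notation "⟪" x ", " y "⟫" => (inner A x y : A)

theorem uab_unitary_group_general
    (s sa : ℝ → E →ₗ[ℂ] E)
    (hsg : ∀ r t : ℝ, 0 ≤ r → 0 ≤ t → s (r + t) = (s r).comp (s t))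
    (hiso : ∀ t : ℝ, 0 ≤ t → ∀ x y : E, ⟪s t x, s t y⟫ = ⟪x, y⟫)
    (hadj : ∀ t : ℝ, 0 ≤ t → ∀ x y : E, ⟪s t x, y⟫ = ⟪x, sa t y⟫)
    (a b : ℝ) (ha : 0 ≤ a) (hab : a < b) :
    (∀ t : ℝ, ∀ x ∈ Set.range (pab s sa a b), uab s sa a b t x ∈ Set.range (pab s sa a b)) ∧
    (∀ t : ℝ, ∀ x ∈ Set.range (pab s sa a b), ∀ y ∈ Set.range (pab s sa a b),
      ⟪uab s sa a b t x, uab s sa a b t y⟫ = ⟪x, y⟫) ∧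
    (∀ t : ℝ, ∀ y ∈ Set.range (pab s sa a b),
      ∃ x ∈ Set.range (pab s sa a b), uab s sa a b t x = y) ∧
    (∀ r t : ℝ, ∀ x ∈ Set.range (pab s sa a b),
      uab s sa a b r (uab s sa a b t x) = uab s sa a b (r + t) x) := by
  have h := isometricSemigroup_of_inner hsg hiso hadj
  refine ⟨fun t x _ => uab_apply_mem_range h ha hab t x, fun t x _ y hy => ?_,
    fun t y hy => ⟨uab s sa a b (-t) y, uab_apply_mem_range h ha hab (-t) y, ?_⟩,
    fun r t x _ => by rw [← Module.End.mul_apply, uab_mul h ha hab]⟩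
  · rw [inner_uab_apply_uab_apply hadj h ha hab, pab_apply_of_mem_range h ha hab hy]
  · rw [← Module.End.mul_apply, uab_mul h ha hab, add_neg_cancel, uab_zero h ha hab,
      pab_apply_of_mem_range h ha hab hy]

theorem uab_unitary_group
    (s sa : ℝ → E →ₗ[ℂ] E)
    (hs0 : s 0 = LinearMap.id)
    (hsg : ∀ r t : ℝ, 0 ≤ r → 0 ≤ t → s (r + t) = (s r).comp (s t))
    (hiso : ∀ t : ℝ, 0 ≤ t → ∀ x y : E, ⟪s t x, s t y⟫ = ⟪x, y⟫)
    (hadj : ∀ t : ℝ, 0 ≤ t → ∀ x y : E, ⟪s t x, y⟫ = ⟪x, sa t y⟫)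
    (a b : ℝ) (ha : 0 ≤ a) (hab : a < b) :
    (∀ t : ℝ, ∀ x ∈ Set.range (pab s sa a b), uab s sa a b t x ∈ Set.range (pab s sa a b)) ∧
    (∀ t : ℝ, ∀ x ∈ Set.range (pab s sa a b), ∀ y ∈ Set.range (pab s sa a b),
      ⟪uab s sa a b t x, uab s sa a b t y⟫ = ⟪x, y⟫) ∧
    (∀ t : ℝ, ∀ y ∈ Set.range (pab s sa a b),
      ∃ x ∈ Set.range (pab s sa a b), uab s sa a b t x = y) ∧
    (∀ r t : ℝ, ∀ x ∈ Set.range (pab s sa a b),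
      uab s sa a b r (uab s sa a b t x) = uab s sa a b (r + t) x) :=
  uab_unitary_group_general s sa hsg hiso hadj a b ha hab

end
end

section
/- Let (s_t)_{t≥0} be a strongly continuous semigroup of adjointable isometries on a Hilbert C*-module E. Then the adjoint family t ↦ s_t^* is also strongly continuous; in particular ‖s_t^* x − x‖ ≤ ‖x − s_t x‖ for all x ∈ E and t ≥ 0. -/
/-!
Since `s_t` is an isometry with adjoint `s_t^*`, we get `s_t^* s_t = 1`, so `s_t s_t^*` is a
projection and `y = s_t s_t^* y + (y - s_t s_t^* y)` is an orthogonal decomposition; hence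
`‖s_t^* y‖ = ‖s_t s_t^* y‖ ≤ ‖y‖`. Applied to `y = x - s_t x` this gives
`‖s_t^* x - x‖ ≤ ‖x - s_t x‖`. The adjoints satisfy `s_{r+t}^* = s_t^* s_r^*`, so for `r ≤ t`,
`s_t^* x - s_r^* x = s_r^* (s_{t-r}^* x - x)` has norm at most `‖x - s_{t-r} x‖`, and strong
continuity of `s` at `0` gives (uniform) continuity of `t ↦ s_t^* x`.
-/

open scoped RightActions
open MeasureTheory Filter Topology

noncomputable section

/-- The December-2024 Mathlib `CStarModule` (right `Aᵐᵒᵖ`-action), whose meaning has changed. -/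
class CStarModuleOld (A E : Type*) [NonUnitalSemiring A] [StarRing A] [Module ℂ A]
    [AddCommGroup E] [Module ℂ E] [PartialOrder A] [SMul Aᵐᵒᵖ E] [Norm A] [Norm E]
    extends Inner A E where
  inner_add_right {x} {y} {z} : inner x (y + z) = inner x y + inner x z
  inner_self_nonneg {x} : 0 ≤ inner x x
  inner_self {x} : inner x x = 0 ↔ x = 0
  inner_op_smul_right {a : A} {x y : E} : inner x (y <• a) = inner x y * a
  inner_smul_right_complex {z : ℂ} {x} {y} : inner x (z • y) = z • inner x y
  star_inner x y : star (inner x y) = inner y x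
  norm_eq_sqrt_norm_inner_self x : ‖x‖ = √‖inner x x‖

variable {A E : Type*} [CStarAlgebra A] [PartialOrder A] [StarOrderedRing A]
  [NormedAddCommGroup E] [NormedSpace ℂ E] [SMul Aᵐᵒᵖ E] [CStarModuleOld A E]

local notation "⟪" x ", " y "⟫" => (inner A x y : A)

namespace CStarModuleOld

omit [StarOrderedRing A] in
theorem inner_add_left {x y z : E} : ⟪x + y, z⟫ = ⟪x, z⟫ + ⟪y, z⟫ := by
  rw [← star_inner z, inner_add_right, star_add, star_inner, star_inner]

omit [StarOrderedRing A] in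
theorem inner_sub_right {x y z : E} : ⟪x, y - z⟫ = ⟪x, y⟫ - ⟪x, z⟫ := by
  rw [eq_sub_iff_add_eq, ← inner_add_right, sub_add_cancel]

omit [StarOrderedRing A] in
theorem ext_inner_left {x y : E} (h : ∀ z, ⟪z, x⟫ = ⟪z, y⟫) : x = y := by
  rw [← sub_eq_zero, ← inner_self (A := A), inner_sub_right, h, sub_self]

theorem inner_self_le_inner_self_add {x y : E} (h : ⟪x, y⟫ = 0) : ⟪x, x⟫ ≤ ⟪x + y, x + y⟫ := by
  have h' : ⟪y, x⟫ = 0 := by rw [← star_inner, h, star_zero]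
  rw [inner_add_left, inner_add_right, inner_add_right, h, h', add_zero, zero_add]
  exact le_add_of_nonneg_right inner_self_nonneg

theorem norm_le_norm_of_inner_self_le {x y : E} (h : ⟪x, x⟫ ≤ ⟪y, y⟫) : ‖x‖ ≤ ‖y‖ := by
  rw [norm_eq_sqrt_norm_inner_self (A := A) x, norm_eq_sqrt_norm_inner_self (A := A) y]
  exact Real.sqrt_le_sqrt (CStarAlgebra.norm_le_norm_of_nonneg_of_le inner_self_nonneg h)

theorem norm_eq_norm_of_inner_self_eq {x y : E} (h : ⟪x, x⟫ = ⟪y, y⟫) : ‖x‖ = ‖y‖ :=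
  (norm_le_norm_of_inner_self_le h.le).antisymm (norm_le_norm_of_inner_self_le h.ge)

section Isometry

variable {S T : E →ₗ[ℂ] E}

omit [StarOrderedRing A] in
theorem leftInverse_adjoint_of_isometry (hiso : ∀ x y, ⟪S x, S y⟫ = ⟪x, y⟫)
    (hadj : ∀ x y, ⟪S x, y⟫ = ⟪x, T y⟫) : Function.LeftInverse T S := fun x =>
  (ext_inner_left fun z => by rw [← hadj, hiso]).symm

theorem norm_adjoint_apply_le (hiso : ∀ x y, ⟪S x, S y⟫ = ⟪x, y⟫)
    (hadj : ∀ x y, ⟪S x, y⟫ = ⟪x, T y⟫) (y : E) : ‖T y‖ ≤ ‖y‖ := by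
  have horth : ⟪S (T y), y - S (T y)⟫ = 0 := by
    rw [hadj, map_sub, leftInverse_adjoint_of_isometry hiso hadj, inner_sub_right, sub_self]
  calc ‖T y‖ = ‖S (T y)‖ := (norm_eq_norm_of_inner_self_eq (hiso _ _)).symm
    _ ≤ ‖S (T y) + (y - S (T y))‖ :=
      norm_le_norm_of_inner_self_le (inner_self_le_inner_self_add horth)
    _ = ‖y‖ := by rw [add_sub_cancel]

theorem norm_adjoint_sub_le (hiso : ∀ x y, ⟪S x, S y⟫ = ⟪x, y⟫)
    (hadj : ∀ x y, ⟪S x, y⟫ = ⟪x, T y⟫) (x : E) : ‖T x - x‖ ≤ ‖x - S x‖ :=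
  calc ‖T x - x‖ = ‖T (x - S x)‖ := by rw [map_sub, leftInverse_adjoint_of_isometry hiso hadj]
    _ ≤ ‖x - S x‖ := norm_adjoint_apply_le hiso hadj _

end Isometry

section Semigroup

variable {s sa : ℝ → E →ₗ[ℂ] E}

omit [StarOrderedRing A] in
theorem adjoint_add_apply (hsg : ∀ r t : ℝ, 0 ≤ r → 0 ≤ t → s (r + t) = (s r).comp (s t))
    (hadj : ∀ t : ℝ, 0 ≤ t → ∀ x y : E, ⟪s t x, y⟫ = ⟪x, sa t y⟫) {r t : ℝ} (hr : 0 ≤ r)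
    (ht : 0 ≤ t) (y : E) : sa (r + t) y = sa t (sa r y) :=
  ext_inner_left fun x => by
    rw [← hadj _ (add_nonneg hr ht), hsg r t hr ht, LinearMap.comp_apply, hadj r hr, hadj t ht]

theorem norm_adjoint_sub_adjoint_le
    (hsg : ∀ r t : ℝ, 0 ≤ r → 0 ≤ t → s (r + t) = (s r).comp (s t))
    (hiso : ∀ t : ℝ, 0 ≤ t → ∀ x y : E, ⟪s t x, s t y⟫ = ⟪x, y⟫)
    (hadj : ∀ t : ℝ, 0 ≤ t → ∀ x y : E, ⟪s t x, y⟫ = ⟪x, sa t y⟫) {r t : ℝ} (hr : 0 ≤ r)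
    (ht : 0 ≤ t) (x : E) : ‖sa t x - sa r x‖ ≤ ‖x - s |t - r| x‖ := by
  wlog hrt : r ≤ t generalizing r t
  · rw [norm_sub_rev, abs_sub_comm]
    exact this ht hr (le_of_not_ge hrt)
  have hd : 0 ≤ t - r := sub_nonneg.2 hrt
  have hsplit : sa t x = sa r (sa (t - r) x) := by
    rw [← adjoint_add_apply hsg hadj hd hr, sub_add_cancel]
  calc ‖sa t x - sa r x‖ = ‖sa r (sa (t - r) x - x)‖ := by rw [map_sub, hsplit]
    _ ≤ ‖sa (t - r) x - x‖ := norm_adjoint_apply_le (hiso r hr) (hadj r hr) _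
    _ ≤ ‖x - s |t - r| x‖ := by
      rw [abs_of_nonneg hd]
      exact norm_adjoint_sub_le (hiso _ hd) (hadj _ hd) x

end Semigroup

end CStarModuleOld

theorem continuousOn_Ici_of_norm_sub_le {F : Type*} [SeminormedAddCommGroup F] {f : ℝ → F}
    {ω : ℝ → ℝ} (hω : Tendsto ω (𝓝[≥] 0) (𝓝 0))
    (hf : ∀ r t : ℝ, 0 ≤ r → 0 ≤ t → ‖f t - f r‖ ≤ ω |t - r|) :
    ContinuousOn f (Set.Ici 0) := by
  intro r hr
  rw [ContinuousWithinAt, tendsto_iff_norm_sub_tendsto_zero]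
  have habs : Tendsto (fun t => |t - r|) (𝓝[Set.Ici 0] r) (𝓝[≥] 0) :=
    tendsto_nhdsWithin_of_tendsto_nhds_of_eventually_within _
      ((((continuous_sub_right r).abs).tendsto' r 0 (by simp)).mono_left nhdsWithin_le_nhds)
      (Eventually.of_forall fun t => Set.mem_Ici.2 (abs_nonneg _))
  exact squeeze_zero' (Eventually.of_forall fun _ => norm_nonneg _)
    (eventually_nhdsWithin_of_forall fun t ht => hf r t hr ht) (hω.comp habs)

theorem adjoint_semigroup_strongly_continuous
    (s sa : ℝ → E →ₗ[ℂ] E)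
    (hs0 : s 0 = LinearMap.id)
    (hsg : ∀ r t : ℝ, 0 ≤ r → 0 ≤ t → s (r + t) = (s r).comp (s t))
    (hiso : ∀ t : ℝ, 0 ≤ t → ∀ x y : E, ⟪s t x, s t y⟫ = ⟪x, y⟫)
    (hadj : ∀ t : ℝ, 0 ≤ t → ∀ x y : E, ⟪s t x, y⟫ = ⟪x, sa t y⟫)
    (hsc : ∀ x : E, ContinuousOn (fun t : ℝ => s t x) (Set.Ici 0)) :
    (∀ x : E, ∀ t : ℝ, 0 ≤ t → ‖sa t x - x‖ ≤ ‖x - s t x‖) ∧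
    (∀ x : E, ContinuousOn (fun t : ℝ => sa t x) (Set.Ici 0)) := by
  refine ⟨fun x t ht => CStarModuleOld.norm_adjoint_sub_le (hiso t ht) (hadj t ht) x, fun x => ?_⟩
  have hω : Tendsto (fun h => ‖x - s h x‖) (𝓝[≥] 0) (𝓝 0) := by
    simpa [hs0] using ((tendsto_const_nhds (x := x)).sub (hsc x 0 Set.self_mem_Ici)).norm
  exact continuousOn_Ici_of_norm_sub_le hω fun r t hr ht =>
    CStarModuleOld.norm_adjoint_sub_adjoint_le hsg hiso hadj hr ht x
end
end
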